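/- arXiv:1603.07471 — 3 statements merged into one kernel-verified Lean document; each statement's English description precedes it below -/
import Mathlib

section
/- Let p be an odd prime, q = p^h, and n ≥ 3. The set S_0 = { x ∈ 𝔽_q^n : x ≠ 0 and Σ_{i=1}^n x_i² = 0 } spans 𝔽_q^n as an 𝔽_q-vector space. -/
/-!
If `a ^ 2 + b ^ 2 = -1` (such `a, b` exist in every finite field) and `i, j, k` are distinct
coordinates, then `a eᵢ + b eⱼ ± e_k` are nonzero isotropic vectors of `∑ xᵢ²`; half their
difference is `e_k`, so in characteristic `≠ 2` every standard basis vector lies in the span.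
-/

open Finset

theorem FiniteField.exists_sq_add_sq_eq_neg_one (F : Type*) [Field F] [Finite F] :
    ∃ a b : F, a ^ 2 + b ^ 2 = -1 := by
  obtain ⟨p, _⟩ := CharP.exists F
  have : NeZero p := ⟨CharP.char_ne_zero_of_finite F p⟩
  obtain ⟨a, b, hab⟩ := CharP.sq_add_sq F p (-1)
  exact ⟨a, b, mod_cast hab⟩

theorem FiniteField.two_ne_zero_of_odd_card {F : Type*} [Field F] [Fintype F]
    (hodd : Odd (Fintype.card F)) : (2 : F) ≠ 0 :=
  Ring.two_ne_zero fun hchar =>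
    Nat.not_even_iff_odd.2 hodd (Nat.even_iff.2 (FiniteField.even_card_iff_char_two.1 hchar))

section Isotropic

variable {F ι : Type*} [Fintype ι] [DecidableEq ι]

theorem sum_sq_single_add_single_add_single [CommSemiring F] {i j k : ι}
    (hij : i ≠ j) (hik : i ≠ k) (hjk : j ≠ k) (a b c : F) :
    ∑ t, (Pi.single i a + Pi.single j b + Pi.single k c : ι → F) t ^ 2 = a ^ 2 + b ^ 2 + c ^ 2 := by
  have hsq : ∀ t, (Pi.single i a + Pi.single j b + Pi.single k c : ι → F) t ^ 2 =
      (Pi.single i (a ^ 2) + Pi.single j (b ^ 2) + Pi.single k (c ^ 2) : ι → F) t := by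
    intro t
    simp only [Pi.add_apply, Pi.single_apply]
    split_ifs <;> simp_all
  simp_rw [hsq, Pi.add_apply, sum_add_distrib, sum_pi_single', if_pos (mem_univ _)]

variable [Field F]

theorem single_mem_span_isotropic (h2 : (2 : F) ≠ 0) {a b : F} (hab : a ^ 2 + b ^ 2 = -1)
    {i j k : ι} (hij : i ≠ j) (hik : i ≠ k) (hjk : j ≠ k) :
    Pi.single k 1 ∈ Submodule.span F {x : ι → F | x ≠ 0 ∧ ∑ t, x t ^ 2 = 0} := by
  set v : F → ι → F := fun e => Pi.single i a + Pi.single j b + Pi.single k e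
  have hv_mem : ∀ e : F, e ^ 2 = 1 →
      v e ∈ Submodule.span F {x : ι → F | x ≠ 0 ∧ ∑ t, x t ^ 2 = 0} := by
    intro e he
    refine Submodule.subset_span ⟨fun hzero => ?_, ?_⟩
    · have hk := congrFun hzero k
      simp [v, hik, hjk] at hk
      simp [hk] at he
    · rw [sum_sq_single_add_single_add_single hij hik hjk, hab, he]
      ring
  have hdiff : Pi.single k (1 : F) = (2 : F)⁻¹ • (v 1 - v (-1)) := by
    ext t
    simp only [v, Pi.smul_apply, Pi.sub_apply, Pi.add_apply, Pi.single_apply, smul_eq_mul]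
    split_ifs <;> field_simp <;> ring
  rw [hdiff]
  exact Submodule.smul_mem _ _ (Submodule.sub_mem _ (hv_mem 1 (one_pow 2)) (hv_mem (-1) (by ring)))

theorem span_isotropic_eq_top (h2 : (2 : F) ≠ 0) (hsq : ∃ a b : F, a ^ 2 + b ^ 2 = -1)
    (hι : 3 ≤ Fintype.card ι) :
    Submodule.span F {x : ι → F | x ≠ 0 ∧ ∑ t, x t ^ 2 = 0} = ⊤ := by
  obtain ⟨a, b, hab⟩ := hsq
  rw [eq_top_iff, ← (Pi.basisFun F ι).span_eq, Submodule.span_le]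
  rintro _ ⟨k, rfl⟩
  have hcard : 1 < #(univ.erase k) := by
    rw [card_erase_of_mem (mem_univ k), card_univ]
    omega
  obtain ⟨i, hi, j, hj, hij⟩ := one_lt_card.mp hcard
  simpa using single_mem_span_isotropic h2 hab hij (ne_of_mem_erase hi) (ne_of_mem_erase hj)

end Isotropic

theorem S0_spans_general
    (p h n : ℕ) (hodd : Odd p) (hn : 3 ≤ n)
    (q : ℕ) (hq : q = p ^ h)
    (F : Type) [Field F] [Fintype F] (hF : Fintype.card F = q) :
    Submodule.span F {x : Fin n → F | x ≠ 0 ∧ (∑ i, x i ^ 2) = 0} = ⊤ := by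
  have h2 : (2 : F) ≠ 0 :=
    FiniteField.two_ne_zero_of_odd_card (hF.trans hq ▸ hodd.pow)
  exact span_isotropic_eq_top h2 (FiniteField.exists_sq_add_sq_eq_neg_one F)
    (by rwa [Fintype.card_fin])

/-- Let `p` be an odd prime, `q = p^h`, `n ≥ 3`. The set
`S_0 = {x ∈ 𝔽_q^n : x ≠ 0, ∑ x_i² = 0}` spans `𝔽_q^n` over `𝔽_q`. -/
theorem S0_spans
    (p h n : ℕ) (hp : p.Prime) (hodd : Odd p) (hn : 3 ≤ n)
    (q : ℕ) (hq : q = p ^ h)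
    (F : Type) [Field F] [Fintype F] (hF : Fintype.card F = q) :
    Submodule.span F {x : Fin n → F | x ≠ 0 ∧ (∑ i, x i ^ 2) = 0} = ⊤ :=
  S0_spans_general p h n hodd hn q hq F hF
end

section
/- Let p be an odd prime, q = p^h, and n ≥ 1. Set ε = 0 if q ≡ 1 (mod 4) and ε = 1 if q ≡ 3 (mod 4). If n is odd, then |S_−| = (1/2)·( q^n − q^{n−1} − (−1)^{ε(n+3)/2}·q^{(n+1)/2} + (−1)^{ε(n−1)/2}·q^{(n−1)/2} ). If n is even, then |S_−| = (1/2)·( q^n − q^{n−1} − (−1)^{εn/2}·q^{n/2} + (−1)^{εn/2}·q^{(n−2)/2} ). -/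
/-!
Write `χ` for the quadratic character of `𝔽_q`, `T n = ∑ₓ χ (Q x)` (`sumSqCharSum`) and
`Z n = #{x | Q x = 0}` (`sumSqZeroCount`).
Since `χ` is `1` on nonzero squares and `-1` on non-squares, `2 |S₋| = q ^ n - Z n - T n`.
Splitting off one coordinate, and using `#{t | t ^ 2 = c} = 1 + χ c` together with the Jacobi sum
`∑ₛ χ s * χ (s + a) = -1` for `a ≠ 0`, gives `T (n + 1) = q Z n - q ^ n` and
`Z (n + 1) = q ^ n + χ (-1) T n`. Hence `T (n + 2) = χ (-1) q T n` with `T 0 = 0`, `T 1 = q - 1`,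
and `χ (-1) = (-1) ^ ε`.
-/

open Finset

section

variable {F : Type*} [Field F] [Fintype F]

theorem sum_sumSq_succ {M : Type*} [AddCommMonoid M] (f : F → M) (n : ℕ) :
    ∑ x : Fin (n + 1) → F, f (∑ i, x i ^ 2) = ∑ y : Fin n → F, ∑ t, f (t ^ 2 + ∑ i, y i ^ 2) := by
  rw [← (Fin.consEquiv fun _ => F).sum_comp, Fintype.sum_prod_type, sum_comm]
  simp [Fin.consEquiv, Fin.sum_univ_succ]

variable [DecidableEq F]

theorem quadraticChar_sum_mul_add (hF : ringChar F ≠ 2) {a : F} (ha : a ≠ 0) :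
    ∑ s, quadraticChar F s * quadraticChar F (s + a) = -1 := by
  set χ := quadraticChar F
  have hJ : ∑ x, χ x * χ (1 - x) = -χ (-1) := by
    have := jacobiSum_nontrivial_inv (quadraticChar_ne_one hF)
    rwa [(quadraticChar_isQuadratic F).inv, jacobiSum] at this
  have hna : -a ≠ 0 := neg_ne_zero.mpr ha
  calc ∑ s, χ s * χ (s + a) = ∑ x, χ (-a * x) * χ (-a * x + a) :=
        (Equiv.sum_comp (Equiv.mulLeft₀ (-a) hna) _).symm
    _ = ∑ x, χ (-1) * χ a ^ 2 * (χ x * χ (1 - x)) := by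
        refine sum_congr rfl fun x _ => ?_
        rw [show -a * x + a = a * (1 - x) by ring, show -a * x = -1 * a * x by ring]
        simp only [map_mul]
        ring
    _ = -1 := by
        rw [← mul_sum, hJ, quadraticChar_sq_one ha, mul_one, mul_neg, ← sq,
          quadraticChar_sq_one (neg_ne_zero.mpr one_ne_zero)]

theorem sum_comp_sq (hF : ringChar F ≠ 2) (f : F → ℤ) :
    ∑ t, f (t ^ 2) = ∑ s, (quadraticChar F s + 1) * f s := by
  rw [← sum_fiberwise' univ (· ^ 2) f]
  refine sum_congr rfl fun s _ => ?_
  rw [sum_const, ← quadraticChar_card_sqrts hF s, Set.toFinset_ofPred, nsmul_eq_mul]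

theorem quadraticChar_sum_sq_add_of_ne_zero (hF : ringChar F ≠ 2) {a : F} (ha : a ≠ 0) :
    ∑ t, quadraticChar F (t ^ 2 + a) = -1 := by
  rw [sum_comp_sq hF (fun s => quadraticChar F (s + a))]
  simp only [add_mul, one_mul, sum_add_distrib, quadraticChar_sum_mul_add hF ha]
  rw [Fintype.sum_equiv (Equiv.addRight a) (quadraticChar F <| · + a) _ fun _ => rfl,
    quadraticChar_sum_zero hF, add_zero]

theorem quadraticChar_sum_sq :
    ∑ t : F, quadraticChar F (t ^ 2) = Fintype.card F - 1 := by
  have hsq : ∀ t : F, quadraticChar F (t ^ 2) = (1 : MulChar F ℤ) t := fun t => by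
    rw [map_pow, ← MulChar.pow_apply' _ two_ne_zero, (quadraticChar_isQuadratic F).sq_eq_one]
  simp only [hsq, MulChar.sum_one_eq_card_units, Fintype.card_eq_card_units_add_one (α := F)]
  push_cast
  ring

theorem card_sq_add_eq_zero (hF : ringChar F ≠ 2) (c : F) :
    (#{t | t ^ 2 + c = 0} : ℤ) = quadraticChar F (-c) + 1 := by
  rw [natCast_card_filter, sum_comp_sq hF (fun s => if s + c = 0 then 1 else 0)]
  simp [add_eq_zero_iff_eq_neg]

theorem quadraticChar_neg_one_eq_neg_one_pow (hF : ringChar F ≠ 2) :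
    quadraticChar F (-1) = (-1) ^ (if Fintype.card F % 4 = 1 then 0 else 1) := by
  rw [quadraticChar_neg_one hF]
  have hodd := FiniteField.odd_card_of_char_ne_two hF
  split_ifs with h
  · rw [ZMod.χ₄_nat_one_mod_four h, pow_zero]
  · rw [ZMod.χ₄_nat_three_mod_four (by omega), pow_one]

theorem quadraticChar_eq_one_sub_ite (a : F) :
    quadraticChar F a = 1 - (if a = 0 then 1 else 0) - 2 * (if IsSquare a then 0 else 1) := by
  rw [quadraticChar_apply, quadraticCharFun]
  split_ifs <;> simp_all

variable (F) in
def sumSqCharSum (n : ℕ) : ℤ := ∑ x : Fin n → F, quadraticChar F (∑ i, x i ^ 2)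

variable (F) in
def sumSqZeroCount (n : ℕ) : ℕ := #{x : Fin n → F | ∑ i, x i ^ 2 = 0}

theorem sumSqCharSum_succ (hF : ringChar F ≠ 2) (n : ℕ) :
    sumSqCharSum F (n + 1) = Fintype.card F * sumSqZeroCount F n - Fintype.card F ^ n := by
  have hinner (c : F) : ∑ t, quadraticChar F (t ^ 2 + c) =
      Fintype.card F * (if c = 0 then 1 else 0) - 1 := by
    split_ifs with hc
    · rw [hc, mul_one]; simp_rw [add_zero]; exact quadraticChar_sum_sq
    · rw [mul_zero, zero_sub, quadraticChar_sum_sq_add_of_ne_zero hF hc]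
  rw [sumSqCharSum, sum_sumSq_succ, sumSqZeroCount, natCast_card_filter, mul_sum]
  simp_rw [hinner, sum_sub_distrib]
  simp

theorem sumSqZeroCount_succ (hF : ringChar F ≠ 2) (n : ℕ) :
    (sumSqZeroCount F (n + 1) : ℤ) =
      Fintype.card F ^ n + quadraticChar F (-1) * sumSqCharSum F n := by
  have hinner (c : F) : (∑ t, if t ^ 2 + c = 0 then 1 else 0 : ℤ) =
      quadraticChar F (-1) * quadraticChar F c + 1 := by
    rw [← natCast_card_filter, card_sq_add_eq_zero hF, ← map_mul, neg_one_mul]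
  rw [sumSqZeroCount, natCast_card_filter,
    sum_sumSq_succ (fun c : F => if c = 0 then (1 : ℤ) else 0)]
  simp_rw [hinner, sum_add_distrib, ← mul_sum]
  simp [sumSqCharSum, add_comm]

theorem sumSqCharSum_add_two (hF : ringChar F ≠ 2) (n : ℕ) :
    sumSqCharSum F (n + 2) = quadraticChar F (-1) * Fintype.card F * sumSqCharSum F n := by
  rw [sumSqCharSum_succ hF, sumSqZeroCount_succ hF]
  ring

theorem sumSqCharSum_two_mul (hF : ringChar F ≠ 2) (k : ℕ) : sumSqCharSum F (2 * k) = 0 := by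
  induction k with
  | zero => simp [sumSqCharSum]
  | succ k ih => rw [mul_add_one, sumSqCharSum_add_two hF, ih, mul_zero]

theorem sumSqCharSum_two_mul_add_one (hF : ringChar F ≠ 2) (k : ℕ) :
    sumSqCharSum F (2 * k + 1) =
      (quadraticChar F (-1) * Fintype.card F) ^ k * (Fintype.card F - 1) := by
  induction k with
  | zero => simp [sumSqCharSum_succ hF, sumSqZeroCount]
  | succ k ih =>
    rw [mul_add_one, add_right_comm, sumSqCharSum_add_two hF, ih]
    ring

theorem two_mul_ncard_not_isSquare_sumSq (n : ℕ) :
    2 * ({x : Fin n → F | ¬ IsSquare (∑ i, x i ^ 2)}.ncard : ℤ) =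
      Fintype.card F ^ n - sumSqZeroCount F n - sumSqCharSum F n := by
  rw [Set.ncard_eq_toFinset_card', Set.toFinset_ofPred, natCast_card_filter, mul_sum,
    sumSqZeroCount, sumSqCharSum]
  simp_rw [quadraticChar_eq_one_sub_ite, sum_sub_distrib]
  simp

theorem two_mul_ncard_not_isSquare_sumSq_odd (hF : ringChar F ≠ 2) (k : ℕ) :
    2 * ({x : Fin (2 * k + 1) → F | ¬ IsSquare (∑ i, x i ^ 2)}.ncard : ℤ) =
      Fintype.card F ^ (2 * k + 1) - Fintype.card F ^ (2 * k)
        - (quadraticChar F (-1) * Fintype.card F) ^ k * (Fintype.card F - 1) := by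
  rw [two_mul_ncard_not_isSquare_sumSq, sumSqZeroCount_succ hF, sumSqCharSum_two_mul hF,
    sumSqCharSum_two_mul_add_one hF, mul_zero, add_zero]

theorem two_mul_ncard_not_isSquare_sumSq_even (hF : ringChar F ≠ 2) (k : ℕ) :
    2 * ({x : Fin (2 * k + 2) → F | ¬ IsSquare (∑ i, x i ^ 2)}.ncard : ℤ) =
      Fintype.card F ^ (2 * k + 2) - Fintype.card F ^ (2 * k + 1)
        - quadraticChar F (-1) ^ (k + 1) * Fintype.card F ^ k * (Fintype.card F - 1) := by
  rw [two_mul_ncard_not_isSquare_sumSq, sumSqZeroCount_succ hF, sumSqCharSum_two_mul_add_one hF,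
    show 2 * k + 2 = 2 * (k + 1) by ring, sumSqCharSum_two_mul hF]
  ring

end

theorem card_Sminus_general
    (p h n : ℕ) (hodd : Odd p)
    (q : ℕ) (hq : q = p ^ h)
    (F : Type) [Field F] [Fintype F] (hF : Fintype.card F = q)
    (ε : ℕ) (hε : ε = if q % 4 = 1 then 0 else 1) :
    (Odd n →
      (2 * ({x : Fin n → F | ¬ IsSquare (∑ i, x i ^ 2)}.ncard : ℤ) =
        (q : ℤ) ^ n - (q : ℤ) ^ (n - 1)
          - (-1 : ℤ) ^ (ε * ((n + 3) / 2)) * (q : ℤ) ^ ((n + 1) / 2)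
          + (-1 : ℤ) ^ (ε * ((n - 1) / 2)) * (q : ℤ) ^ ((n - 1) / 2))) ∧
    (Even n →
      (2 * ({x : Fin n → F | ¬ IsSquare (∑ i, x i ^ 2)}.ncard : ℤ) =
        (q : ℤ) ^ n - (q : ℤ) ^ (n - 1)
          - (-1 : ℤ) ^ (ε * (n / 2)) * (q : ℤ) ^ (n / 2)
          + (-1 : ℤ) ^ (ε * (n / 2)) * (q : ℤ) ^ ((n - 2) / 2))) := by
  classical
  subst hF
  have hF2 : ringChar F ≠ 2 := by
    rw [Ne, FiniteField.even_card_iff_char_two, hq, ← Nat.even_iff, Nat.not_even_iff_odd]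
    exact hodd.pow
  have hpow (m : ℕ) : (-1 : ℤ) ^ (ε * m) = quadraticChar F (-1) ^ m := by
    rw [hε, pow_mul, ← quadraticChar_neg_one_eq_neg_one_pow hF2]
  have hsq : quadraticChar F (-1) ^ 2 = 1 := quadraticChar_sq_one (neg_ne_zero.mpr one_ne_zero)
  constructor
  · rintro ⟨k, rfl⟩
    rw [two_mul_ncard_not_isSquare_sumSq_odd hF2, show (2 * k + 1 + 3) / 2 = k + 2 by omega,
      show (2 * k + 1 + 1) / 2 = k + 1 by omega, show (2 * k + 1 - 1) / 2 = k by omega,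
      Nat.add_sub_cancel, hpow, hpow, pow_add _ k 2, hsq]
    ring
  · rintro ⟨m, rfl⟩
    rcases m with _ | k
    · simp
    · rw [show k + 1 + (k + 1) = 2 * k + 2 by ring, two_mul_ncard_not_isSquare_sumSq_even hF2,
        show (2 * k + 2) / 2 = k + 1 by omega, show (2 * k + 2 - 2) / 2 = k by omega,
        show 2 * k + 2 - 1 = 2 * k + 1 by omega, hpow]
      ring

/-- Let `p` be an odd prime, `q = p^h`, `n ≥ 1`, and `ε = 0`
if `q ≡ 1 (mod 4)`, `ε = 1` if `q ≡ 3 (mod 4)`. If `n` is odd then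
`|S_-| = ½ (q^n - q^{n-1} - (-1)^{ε(n+3)/2} q^{(n+1)/2} + (-1)^{ε(n-1)/2} q^{(n-1)/2})`;
if `n` is even then
`|S_-| = ½ (q^n - q^{n-1} - (-1)^{εn/2} q^{n/2} + (-1)^{εn/2} q^{(n-2)/2})`. -/
theorem card_Sminus
    (p h n : ℕ) (hp : p.Prime) (hodd : Odd p) (hn : 1 ≤ n)
    (q : ℕ) (hq : q = p ^ h)
    (F : Type) [Field F] [Fintype F] (hF : Fintype.card F = q)
    (ε : ℕ) (hε : ε = if q % 4 = 1 then 0 else 1) :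
    (Odd n →
      (2 * ({x : Fin n → F | ¬ IsSquare (∑ i, x i ^ 2)}.ncard : ℤ) =
        (q : ℤ) ^ n - (q : ℤ) ^ (n - 1)
          - (-1 : ℤ) ^ (ε * ((n + 3) / 2)) * (q : ℤ) ^ ((n + 1) / 2)
          + (-1 : ℤ) ^ (ε * ((n - 1) / 2)) * (q : ℤ) ^ ((n - 1) / 2))) ∧
    (Even n →
      (2 * ({x : Fin n → F | ¬ IsSquare (∑ i, x i ^ 2)}.ncard : ℤ) =
        (q : ℤ) ^ n - (q : ℤ) ^ (n - 1)
          - (-1 : ℤ) ^ (ε * (n / 2)) * (q : ℤ) ^ (n / 2)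
          + (-1 : ℤ) ^ (ε * (n / 2)) * (q : ℤ) ^ ((n - 2) / 2))) :=
  card_Sminus_general p h n hodd q hq F hF ε hε
end

section
/- Let p be an odd prime, q = p^h, n ≥ 3, and set m = h·⌈(n−2)/2⌉. Then p^m divides |S_−|, the quotient |S_−|/p^m is not divisible by p (that is, p^m is the largest power of p dividing |S_−|), and 2·|S_−|/p^m ≡ 1 (mod q) or 2·|S_−|/p^m ≡ −1 (mod q). -/
/-!
Write `N_n(a)` for the number of `x ∈ 𝔽_q^n` with `Q(x) = a`, `χ` for the quadratic character and
`η = χ(-1)`. Since `N_1(b) = 1 + χ(b)`, a Jacobi sum computation gives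
`N_2(c) = q - η + ηq·[c = 0]`, and convolving with `N_2` yields
`N_{n+2}(a) = q^n (q - η) + ηq·N_n(a)`. Summing over the `M = (q - 1)/2` nonsquares gives the same
recursion for `|S_−|`, which vanishes for `n ≤ 1`; hence `|S_−(n + 1)| = M q^s (q^r - η^r)` with
`s = ⌊n/2⌋`, `r = ⌈n/2⌉`. Thus `|S_−| = p^m k` with `k = M (q^r - η^r)`, and for `r ≥ 1`,
`2k = (q - 1)(q^r - η^r) ≡ η^r = ±1 (mod q)`, which also rules out `p ∣ k`.
-/

open Finset

lemma ncard_nonsquare_sumSq_of_le_one {R : Type*} [CommSemiring R] {n : ℕ} (hn : n ≤ 1) :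
    {x : Fin n → R | ¬IsSquare (∑ i, x i ^ 2)}.ncard = 0 := by
  have hsq (x : Fin n → R) : IsSquare (∑ i, x i ^ 2) := by
    interval_cases n
    · simp
    · simpa using IsSquare.sq (x 0)
  simp [hsq]

section CommRing

variable {R : Type*} [CommRing R] [Fintype R] [DecidableEq R]

def sumSqCount (n : ℕ) (a : R) : ℕ := #{x : Fin n → R | ∑ i, x i ^ 2 = a}

lemma sum_sumSqCount (n : ℕ) : ∑ a : R, sumSqCount n a = Fintype.card R ^ n := by
  simp only [sumSqCount]
  rw [← card_eq_sum_card_fiberwise (fun _ _ => mem_univ _), card_univ, Fintype.card_fun,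
    Fintype.card_fin]

lemma sumSqCount_add (m n : ℕ) (a : R) :
    sumSqCount (m + n) a = ∑ c, sumSqCount m c * sumSqCount n (a - c) := by
  calc sumSqCount (m + n) a
      = ∑ y : Fin m → R, sumSqCount n (a - ∑ i, y i ^ 2) := by
        simp only [sumSqCount, card_filter]
        rw [← (Fin.appendEquiv m n).sum_comp, Fintype.sum_prod_type]
        simp only [Fin.appendEquiv_apply, Fin.sum_univ_add, Fin.append_left, Fin.append_right,
          ← eq_sub_iff_add_eq']
    _ = ∑ c, sumSqCount m c * sumSqCount n (a - c) := by
        rw [← sum_fiberwise' univ (fun y : Fin m → R => ∑ i, y i ^ 2)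
          fun c => sumSqCount n (a - c)]
        simp only [sum_const, smul_eq_mul, sumSqCount]

lemma ncard_nonsquare_sumSq [DecidablePred (IsSquare : R → Prop)] (n : ℕ) :
    {x : Fin n → R | ¬IsSquare (∑ i, x i ^ 2)}.ncard
      = ∑ a : R with ¬IsSquare a, sumSqCount n a := by
  rw [Set.ncard_eq_toFinset_card', Set.toFinset_ofPred,
    card_eq_sum_card_fiberwise (f := fun x : Fin n → R => ∑ i, x i ^ 2)
      (t := {a : R | ¬IsSquare a}) fun x hx => by simpa using hx]
  refine sum_congr rfl fun a ha => ?_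
  rw [filter_filter, sumSqCount]
  congr 1
  ext x
  simp only [mem_filter, mem_univ, true_and, and_iff_right_iff_imp]
  rintro rfl
  simpa using ha

end CommRing

section Field

variable {F : Type*} [Field F] [Fintype F] [DecidableEq F]

lemma sumSqCount_one (hF : ringChar F ≠ 2) (a : F) :
    (sumSqCount 1 a : ℤ) = 1 + quadraticChar F a := by
  rw [add_comm, ← quadraticChar_card_sqrts hF a, sumSqCount, Set.toFinset_ofPred,
    ← card_map (Equiv.funUnique (Fin 1) F).toEmbedding]
  congr 2
  ext x
  simp [Equiv.funUnique]

lemma sum_quadraticChar_sub (hF : ringChar F ≠ 2) (a : F) :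
    ∑ b, quadraticChar F (a - b) = 0 :=
  (Equiv.sum_comp (Equiv.subLeft a) (quadraticChar F)).trans (quadraticChar_sum_zero hF)

lemma sum_quadraticChar_mul_quadraticChar_sub (hF : ringChar F ≠ 2) (a : F) :
    ∑ b, quadraticChar F b * quadraticChar F (a - b)
      = quadraticChar F (-1) * ((if a = 0 then (Fintype.card F : ℤ) else 0) - 1) := by
  rcases eq_or_ne a 0 with rfl | ha
  · have hsq (b : F) : quadraticChar F b * quadraticChar F (0 - b)
        = quadraticChar F (-1) * (1 - if b = 0 then 1 else 0) := by
      rcases eq_or_ne b 0 with rfl | hb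
      · simp
      · rw [zero_sub, neg_eq_neg_one_mul, map_mul, if_neg hb, mul_left_comm, ← sq,
          quadraticChar_sq_one hb, sub_zero, mul_one]
    rw [sum_congr rfl fun b _ => hsq b, ← mul_sum, sum_sub_distrib, if_pos rfl]
    simp
  · rw [← Equiv.sum_comp (Equiv.mulLeft₀ a ha), if_neg ha, zero_sub, mul_neg_one]
    have hχ : quadraticChar F a ^ 2 = 1 := quadraticChar_sq_one ha
    calc ∑ x, quadraticChar F (a * x) * quadraticChar F (a - a * x)
        = jacobiSum (quadraticChar F) (quadraticChar F)⁻¹ := by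
          rw [(quadraticChar_isQuadratic F).inv, jacobiSum]
          refine sum_congr rfl fun x _ => ?_
          rw [← mul_one_sub, map_mul, map_mul]
          linear_combination (quadraticChar F x * quadraticChar F (1 - x)) * hχ
      _ = -quadraticChar F (-1) := jacobiSum_nontrivial_inv (quadraticChar_ne_one hF)

lemma sumSqCount_two (hF : ringChar F ≠ 2) (a : F) :
    (sumSqCount 2 a : ℤ) = Fintype.card F - quadraticChar F (-1)
      + quadraticChar F (-1) * if a = 0 then (Fintype.card F : ℤ) else 0 := by
  rw [sumSqCount_add 1 1]
  push_cast
  simp only [sumSqCount_one hF, add_mul, mul_add, one_mul, mul_one, sum_add_distrib,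
    sum_quadraticChar_mul_quadraticChar_sub hF, sum_quadraticChar_sub hF,
    quadraticChar_sum_zero hF, sum_const, card_univ, nsmul_eq_mul]
  ring

lemma sumSqCount_add_two (hF : ringChar F ≠ 2) (n : ℕ) (a : F) :
    (sumSqCount (n + 2) a : ℤ) = Fintype.card F ^ n * (Fintype.card F - quadraticChar F (-1))
      + quadraticChar F (-1) * Fintype.card F * sumSqCount n a := by
  have hsum : ∑ c : F, (sumSqCount n c : ℤ) = Fintype.card F ^ n := by
    exact_mod_cast sum_sumSqCount (R := F) n
  rw [sumSqCount_add n 2]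
  push_cast
  simp only [sumSqCount_two hF, mul_add, sum_add_distrib, ← sum_mul, sub_eq_zero, mul_ite,
    mul_zero, sum_ite_eq, mem_univ, if_true, hsum]
  ring

variable [DecidablePred (IsSquare : F → Prop)]

lemma two_mul_card_nonsquare_add_one (hF : ringChar F ≠ 2) :
    2 * #{a : F | ¬IsSquare a} + 1 = Fintype.card F := by
  have hind (a : F) : 2 * (if ¬IsSquare a then 1 else 0 : ℤ)
      = 1 - quadraticChar F a - if a = 0 then 1 else 0 := by
    rcases eq_or_ne a 0 with rfl | ha
    · simp
    by_cases hsq : IsSquare a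
    · simp [hsq, ha, (quadraticChar_one_iff_isSquare ha).mpr hsq]
    · simp [hsq, ha, quadraticChar_neg_one_iff_not_isSquare.mpr hsq]
  zify
  rw [← sum_boole, mul_sum, sum_congr rfl fun a _ => hind a, sum_sub_distrib, sum_sub_distrib,
    quadraticChar_sum_zero hF]
  simp

lemma ncard_nonsquare_sumSq_add_two (hF : ringChar F ≠ 2) (n : ℕ) :
    ({x : Fin (n + 2) → F | ¬IsSquare (∑ i, x i ^ 2)}.ncard : ℤ)
      = #{a : F | ¬IsSquare a} * Fintype.card F ^ n * (Fintype.card F - quadraticChar F (-1))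
        + quadraticChar F (-1) * Fintype.card F
          * {x : Fin n → F | ¬IsSquare (∑ i, x i ^ 2)}.ncard := by
  simp only [ncard_nonsquare_sumSq, Nat.cast_sum, sumSqCount_add_two hF, sum_add_distrib,
    sum_const, nsmul_eq_mul, ← mul_sum]
  ring

lemma ncard_nonsquare_sumSq_succ (hF : ringChar F ≠ 2) (n : ℕ) :
    ({x : Fin (n + 1) → F | ¬IsSquare (∑ i, x i ^ 2)}.ncard : ℤ)
      = #{a : F | ¬IsSquare a} * Fintype.card F ^ (n / 2)
        * (Fintype.card F ^ ((n + 1) / 2) - quadraticChar F (-1) ^ ((n + 1) / 2)) := by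
  induction n using Nat.twoStepInduction with
  | zero => rw [ncard_nonsquare_sumSq_of_le_one le_rfl]; simp
  | one =>
    rw [ncard_nonsquare_sumSq_add_two hF 0, ncard_nonsquare_sumSq_of_le_one zero_le_one]
    simp
  | more n ih _ =>
    have hpow : (Fintype.card F : ℤ) ^ (n + 1)
        = Fintype.card F ^ (n / 2) * Fintype.card F ^ ((n + 1) / 2) * Fintype.card F := by
      rw [← pow_add, ← pow_succ]
      congr 2
      omega
    rw [show (n + 2) / 2 = n / 2 + 1 by omega, show (n + 2 + 1) / 2 = (n + 1) / 2 + 1 by omega,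
      show n + 2 + 1 = n + 1 + 2 from rfl, ncard_nonsquare_sumSq_add_two hF (n + 1), ih, hpow]
    ring

end Field

lemma Int.ceil_natCast_add_one_sub_two_div_two {K : Type*} [Field K] [LinearOrder K]
    [IsStrictOrderedRing K] [FloorRing K] (j : ℕ) :
    ⌈(((j + 1 : ℕ) : K) - 2) / 2⌉ = (j / 2 : ℕ) := by
  obtain ⟨t, rfl | rfl⟩ := Nat.even_or_odd' j <;>
  · rw [Int.ceil_eq_iff, show (_ : ℕ) / 2 = t by omega]
    push_cast
    constructor <;> linarith

lemma Int.two_mul_mul_pow_sub_modEq {M q e : ℤ} {r : ℕ} (hM : 2 * M + 1 = q) (hr : r ≠ 0) :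
    2 * (M * (q ^ r - e)) ≡ e [ZMOD q] := by
  have hM' : 2 * M ≡ -1 [ZMOD q] := Int.modEq_iff_dvd.mpr ⟨-1, by linear_combination -hM⟩
  have hq : q ^ r ≡ 0 [ZMOD q] := Int.modEq_zero_iff_dvd.mpr (dvd_pow_self q hr)
  calc 2 * (M * (q ^ r - e)) = 2 * M * (q ^ r - e) := by ring
    _ ≡ -1 * (0 - e) [ZMOD q] := hM'.mul (hq.sub rfl)
    _ = e := by ring

lemma Int.not_dvd_of_two_mul_modEq {p q k e : ℤ} (hpq : p ∣ q) (hp : ¬IsUnit p) (he : IsUnit e)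
    (hk : 2 * k ≡ e [ZMOD q]) : ¬p ∣ k := fun hpk =>
  hp <| isUnit_of_dvd_unit (by simpa using dvd_add (hpq.trans hk.dvd) (hpk.mul_left 2)) he

lemma exists_eq_pow_mul_of_eq_mul_pow_mul_pow_sub {p h q s r M C : ℕ} {e : ℤ} (hq : q = p ^ h)
    (hq1 : 1 < q) (hM : 2 * M + 1 = q) (hr : r ≠ 0) (he : IsUnit e)
    (hC : (C : ℤ) = M * q ^ s * (q ^ r - e)) :
    ∃ k : ℕ, C = p ^ (h * s) * k ∧ ¬p ∣ k ∧
      (2 * (k : ℤ) ≡ 1 [ZMOD q] ∨ 2 * (k : ℤ) ≡ -1 [ZMOD q]) := by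
  obtain ⟨k, hk⟩ : ∃ k : ℕ, (M : ℤ) * (q ^ r - e) = k := by
    refine Int.eq_ofNat_of_zero_le (mul_nonneg (Nat.cast_nonneg _) (sub_nonneg.mpr ?_))
    exact (Int.isUnit_iff_abs_eq.mp he ▸ le_abs_self e).trans (one_le_pow₀ (by omega))
  have hk2 : 2 * (k : ℤ) ≡ e [ZMOD q] :=
    hk ▸ Int.two_mul_mul_pow_sub_modEq (by exact_mod_cast hM) hr
  refine ⟨k, ?_, fun hpk => ?_, ?_⟩
  · zify
    rw [hC, pow_mul, ← hk, hq]
    push_cast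
    ring
  · have hpq : p ∣ q := hq ▸ dvd_pow_self p (by rintro rfl; simp [hq] at hq1)
    have hp : ¬IsUnit (p : ℤ) := by
      rw [Int.ofNat_isUnit, Nat.isUnit_iff]
      rintro rfl
      simp [hq] at hq1
    exact Int.not_dvd_of_two_mul_modEq (Int.natCast_dvd_natCast.mpr hpq) hp he hk2
      (Int.natCast_dvd_natCast.mpr hpk)
  · rcases Int.isUnit_iff.mp he with rfl | rfl
    exacts [.inl hk2, .inr hk2]

theorem Sminus_card_p_adic_general
    (p h n : ℕ) (hodd : Odd p) (hn : 3 ≤ n)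
    (q : ℕ) (hq : q = p ^ h)
    (F : Type) [Field F] [Fintype F] (hF : Fintype.card F = q)
    (m : ℕ) (hm : (m : ℚ) = (h : ℚ) * ⌈((n : ℚ) - 2) / 2⌉) :
    ∃ k : ℕ,
      {x : Fin n → F | ¬ IsSquare (∑ i, x i ^ 2)}.ncard = p ^ m * k ∧
      ¬ (p ∣ k) ∧
      ((2 * (k : ℤ)) ≡ 1 [ZMOD (q : ℤ)] ∨ (2 * (k : ℤ)) ≡ -1 [ZMOD (q : ℤ)]) := by
  classical
  have hF2 : ringChar F ≠ 2 := fun h2 =>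
    Nat.not_even_iff_odd.mpr (hF ▸ hq ▸ hodd.pow)
      (Nat.even_iff.mpr (FiniteField.even_card_of_char_two h2))
  obtain ⟨j, rfl⟩ : ∃ j, n = j + 1 := ⟨n - 1, by omega⟩
  rw [Int.ceil_natCast_add_one_sub_two_div_two] at hm
  obtain rfl : m = h * (j / 2) := by exact_mod_cast hm
  have hS := ncard_nonsquare_sumSq_succ hF2 j
  rw [hF] at hS
  exact exists_eq_pow_mul_of_eq_mul_pow_mul_pow_sub hq (hF ▸ Fintype.one_lt_card)
    ((two_mul_card_nonsquare_add_one hF2).trans hF) (by omega)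
    ((Int.isUnit_iff.mpr (quadraticChar_dichotomy (neg_ne_zero.mpr one_ne_zero))).pow _) hS

/-- Let `p` be an odd prime, `q = p^h`, `n ≥ 3`, and
`m = h·⌈(n-2)/2⌉`. Then `p^m` exactly divides `|S_-|` (i.e. `|S_-| = p^m·k`
with `p ∤ k`) and `2·|S_-|/p^m ≡ ±1 (mod q)`. -/
theorem Sminus_card_p_adic
    (p h n : ℕ) (hp : p.Prime) (hodd : Odd p) (hn : 3 ≤ n)
    (q : ℕ) (hq : q = p ^ h)
    (F : Type) [Field F] [Fintype F] (hF : Fintype.card F = q)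
    (m : ℕ) (hm : (m : ℚ) = (h : ℚ) * ⌈((n : ℚ) - 2) / 2⌉) :
    ∃ k : ℕ,
      {x : Fin n → F | ¬ IsSquare (∑ i, x i ^ 2)}.ncard = p ^ m * k ∧
      ¬ (p ∣ k) ∧
      ((2 * (k : ℤ)) ≡ 1 [ZMOD (q : ℤ)] ∨ (2 * (k : ℤ)) ≡ -1 [ZMOD (q : ℤ)]) :=
  Sminus_card_p_adic_general p h n hodd hn q hq F hF m hm
end
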